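/- Let B ⊆ P be a principal coalgebra C-extension, π: C → D a coalgebra map, e the copointing group-like, ē = π(e), A = P^{co D}_ē, and X = C^{co D}_ē. Then the canonical Galois map restricts to an isomorphism of left P-modules P ⊗_B A ≅ P ⊗ X. -/

import Mathlib

/-!
The equivariant splitting `σ : P → B ⊗ P` of the multiplication yields the endomorphism
`θ (p ⊗ q) = p σ(q)` of `P ⊗ P`. It vanishes on the relations of `P ⊗_B P`, it does not change
the Galois map, and, since colinearity of `σ` forces `σ(A) ⊆ B ⊗ A`, it moves elements of
`P ⊗ A` only by relations of `P ⊗_B A`.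

Over the field `k` everything is flat, so `P ⊗ A` and `P ⊗ X` are the kernels of the maps induced
by `x ↦ (id ⊗ π) δ(x) - x ⊗ ē` (for `δ = ρ`, resp. `δ = Δ`), and coassociativity makes the Galois
map intertwine the two. Hence `can (P ⊗ A) ⊆ P ⊗ X`. Conversely, if `can w ∈ P ⊗ X` then the
image of `w` under the first map lies in `ker can ⊗ D`, which `θ ⊗ D` kills, so `θ w ∈ P ⊗ A`
is a preimage. Finally, if `w ∈ P ⊗ A` and `can w = 0`, then `w` is a relation of `P ⊗_B P`,
so `w = w - θ w` is a relation of `P ⊗_B A`.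
-/

open TensorProduct

variable (k C D P : Type) [Field k] [AddCommGroup C] [Module k C] [Coalgebra k C]
  [AddCommGroup D] [Module k D] [Coalgebra k D]
  [Ring P] [Algebra k P]

/-- The canonical Galois map `P ⊗ P → P ⊗ C`, `p ⊗ q ↦ p·ρ(q)`. -/
noncomputable def canMap (ρ : P →ₗ[k] P ⊗[k] C) : P ⊗[k] P →ₗ[k] P ⊗[k] C :=
  LinearMap.rTensor C (LinearMap.mul' k P) ∘ₗ
    (TensorProduct.assoc k P P C).symm.toLinearMap ∘ₗ LinearMap.lTensor P ρ

/-- The coinvariants `B = P^{co C}`. -/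
def coinv (ρ : P →ₗ[k] P ⊗[k] C) : Set P :=
  {b : P | ∀ p : P, ρ (b * p) = LinearMap.rTensor C (LinearMap.mulLeft k b) (ρ p)}

/-- The kernel of `P ⊗ₖ P → P ⊗_B P`. -/
def galRel (ρ : P →ₗ[k] P ⊗[k] C) : Submodule k (P ⊗[k] P) :=
  Submodule.span k
    {w : P ⊗[k] P | ∃ p q b : P, b ∈ coinv k C P ρ ∧
      w = (p * b) ⊗ₜ[k] q - p ⊗ₜ[k] (b * q)}

/-- The `ē`-coinvariants `X ⊆ C`. -/
noncomputable def Xsub (π : C →ₗ[k] D) (eb : D) : Submodule k C :=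
  LinearMap.ker
    ((LinearMap.lTensor C π ∘ₗ Coalgebra.comul (R := k) (A := C)) -
      (TensorProduct.mk k C D).flip eb)

/-- The `ē`-coinvariants `A ⊆ P`. -/
noncomputable def Asub (ρ : P →ₗ[k] P ⊗[k] C) (π : C →ₗ[k] D) (eb : D) :
    Submodule k P :=
  LinearMap.ker ((LinearMap.lTensor P π ∘ₗ ρ) - (TensorProduct.mk k P D).flip eb)

/-- The kernel of `P ⊗ₖ A → P ⊗_B A`. -/
noncomputable def galRelA (ρ : P →ₗ[k] P ⊗[k] C) (π : C →ₗ[k] D) (eb : D) :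
    Submodule k (P ⊗[k] P) :=
  Submodule.span k
    {w : P ⊗[k] P | ∃ p : P, ∃ b ∈ coinv k C P ρ, ∃ a ∈ Asub k C D P ρ π eb,
      w = (p * b) ⊗ₜ[k] a - p ⊗ₜ[k] (b * a)}

open LinearMap

section LeftMulExtend

variable {R A M N E : Type*} [CommSemiring R] [Semiring A] [Algebra R A]
  [AddCommMonoid M] [Module R M] [AddCommMonoid N] [Module R N] [AddCommMonoid E] [Module R E]

noncomputable def leftMulExtend (f : A →ₗ[R] A ⊗[R] M) : A ⊗[R] A →ₗ[R] A ⊗[R] M :=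
  rTensor M (mul' R A) ∘ₗ (TensorProduct.assoc R A A M).symm.toLinearMap ∘ₗ lTensor A f

lemma rTensor_mul'_assoc_symm_tmul (a : A) (z : A ⊗[R] M) :
    rTensor M (mul' R A) ((TensorProduct.assoc R A A M).symm (a ⊗ₜ z)) =
      rTensor M (mulLeft R a) z := by
  induction z using TensorProduct.induction_on with
  | zero => simp
  | tmul b m => simp
  | add x y hx hy => simp only [tmul_add, map_add, hx, hy]

@[simp]
lemma leftMulExtend_tmul (f : A →ₗ[R] A ⊗[R] M) (a b : A) :
    leftMulExtend f (a ⊗ₜ b) = rTensor M (mulLeft R a) (f b) :=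
  rTensor_mul'_assoc_symm_tmul a (f b)

lemma leftMulExtend_rTensor_mulLeft (f : A →ₗ[R] A ⊗[R] M) (a : A) (w : A ⊗[R] A) :
    leftMulExtend f (rTensor A (mulLeft R a) w) = rTensor M (mulLeft R a) (leftMulExtend f w) := by
  induction w using TensorProduct.induction_on with
  | zero => simp
  | tmul b c => simp [mulLeft_mul, rTensor_comp]
  | add x y hx hy => simp only [map_add, hx, hy]

lemma leftMulExtend_leftMulExtend (f : A →ₗ[R] A ⊗[R] A) (g : A →ₗ[R] A ⊗[R] M)
    (w : A ⊗[R] A) :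
    leftMulExtend g (leftMulExtend f w) = leftMulExtend (leftMulExtend g ∘ₗ f) w := by
  induction w using TensorProduct.induction_on with
  | zero => simp
  | tmul a b => simp [leftMulExtend_rTensor_mulLeft]
  | add x y hx hy => simp only [map_add, hx, hy]

lemma leftMulExtend_apply_of_section (f : A →ₗ[R] A ⊗[R] M) (σ : A →ₗ[R] A ⊗[R] A)
    (hσ : ∀ a, mul' R A (σ a) = a)
    (hf : ∀ a, rTensor M σ (f a) = (TensorProduct.assoc R A A M).symm (lTensor A f (σ a)))
    (a : A) : leftMulExtend f (σ a) = f a := by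
  have hid : mul' R A ∘ₗ σ = LinearMap.id := LinearMap.ext hσ
  change rTensor M (mul' R A) ((TensorProduct.assoc R A A M).symm (lTensor A f (σ a))) = f a
  rw [← hf, ← LinearMap.comp_apply, ← rTensor_comp, hid, rTensor_id, LinearMap.id_apply]

lemma assoc_symm_lTensor_rTensor {A' : Type*} [AddCommMonoid A'] [Module R A']
    (x : A →ₗ[R] A') (g : M →ₗ[R] N ⊗[R] E) (z : A ⊗[R] M) :
    (TensorProduct.assoc R A' N E).symm (lTensor A' g (rTensor M x z)) =
      rTensor E (rTensor N x) ((TensorProduct.assoc R A N E).symm (lTensor A g z)) := by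
  induction z using TensorProduct.induction_on with
  | zero => simp
  | tmul a m =>
    simp only [rTensor_tmul, lTensor_tmul]
    induction g m using TensorProduct.induction_on with
    | zero => simp
    | tmul n e => simp
    | add y y' hy hy' => simp only [tmul_add, map_add, hy, hy']
  | add y y' hy hy' => simp only [map_add, hy, hy']

lemma rTensor_leftMulExtend_assoc_symm_tmul (f : A →ₗ[R] A ⊗[R] M) (a : A) (y : A ⊗[R] E) :
    rTensor E (leftMulExtend f) ((TensorProduct.assoc R A A E).symm (a ⊗ₜ y)) =
      rTensor E (rTensor M (mulLeft R a)) (rTensor E f y) := by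
  induction y using TensorProduct.induction_on with
  | zero => simp
  | tmul b e => simp
  | add y y' hy hy' => simp only [tmul_add, map_add, hy, hy']

lemma assoc_symm_lTensor_leftMulExtend (f : A →ₗ[R] A ⊗[R] M) (g : M →ₗ[R] M ⊗[R] E)
    (h : A →ₗ[R] A ⊗[R] E)
    (hfg : ∀ a, (TensorProduct.assoc R A M E).symm (lTensor A g (f a)) = rTensor E f (h a))
    (w : A ⊗[R] A) :
    (TensorProduct.assoc R A M E).symm (lTensor A g (leftMulExtend f w)) =
      rTensor E (leftMulExtend f) ((TensorProduct.assoc R A A E).symm (lTensor A h w)) := by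
  induction w using TensorProduct.induction_on with
  | zero => simp
  | tmul a b =>
    rw [leftMulExtend_tmul, assoc_symm_lTensor_rTensor, hfg, lTensor_tmul,
      rTensor_leftMulExtend_assoc_symm_tmul]
  | add x y hx hy => simp only [map_add, hx, hy]

end LeftMulExtend

section CoinvMap

variable {R C D U V W : Type*} [CommRing R] [AddCommGroup C] [Module R C] [AddCommGroup D]
  [Module R D] [AddCommGroup U] [Module R U] [AddCommGroup V] [Module R V] [AddCommGroup W]
  [Module R W]

noncomputable def coinvMap (α : V →ₗ[R] V ⊗[R] C) (π : C →ₗ[R] D) (eb : D) :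
    V →ₗ[R] V ⊗[R] D :=
  lTensor V π ∘ₗ α - (TensorProduct.mk R V D).flip eb

lemma assoc_symm_lTensor_coinvMap (β : U →ₗ[R] U ⊗[R] C) (α : V →ₗ[R] V ⊗[R] C)
    (f : U →ₗ[R] W ⊗[R] V) (π : C →ₗ[R] D) (eb : D)
    (hf : ∀ u, rTensor C f (β u) = (TensorProduct.assoc R W V C).symm (lTensor W α (f u)))
    (u : U) :
    (TensorProduct.assoc R W V D).symm (lTensor W (coinvMap α π eb) (f u)) =
      rTensor D f (coinvMap β π eb u) := by
  have hπ : (TensorProduct.assoc R W V D).symm (lTensor W (lTensor V π ∘ₗ α) (f u)) =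
      rTensor D f (lTensor U π (β u)) := by
    rw [← LinearMap.comp_apply (rTensor D f), rTensor_comp_lTensor, ← lTensor_comp_rTensor,
      LinearMap.comp_apply, hf, lTensor_tensor, lTensor_comp]
    simp
  have heb : ∀ z : W ⊗[R] V,
      (TensorProduct.assoc R W V D).symm (lTensor W ((TensorProduct.mk R V D).flip eb) z) =
        z ⊗ₜ eb := by
    intro z
    induction z using TensorProduct.induction_on with
    | zero => simp
    | tmul w v => simp
    | add x y hx hy => simp only [map_add, hx, hy, add_tmul]
  simp only [coinvMap, lTensor_sub, LinearMap.sub_apply, map_sub, hπ, heb, LinearMap.comp_apply,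
    flip_apply, TensorProduct.mk_apply, rTensor_tmul]

lemma mem_range_lTensor_subtype_ker_iff [Module.Flat R W] (g : U →ₗ[R] V) (x : W ⊗[R] U) :
    x ∈ range (lTensor W (ker g).subtype) ↔ lTensor W g x = 0 :=
  (Module.Flat.lTensor_exact W (exact_subtype_ker_map g) x).symm

end CoinvMap

lemma mem_span_tmul_of_mem_range_lTensor_subtype {K M V : Type*} [Field K] [AddCommGroup M]
    [Module K M] [AddCommGroup V] [Module K V] (S : Set M) (Q : Submodule K V) {z : M ⊗[K] V}
    (hz : z ∈ Submodule.span K {w | ∃ s ∈ S, ∃ v : V, w = s ⊗ₜ v})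
    (hQ : z ∈ range (lTensor M Q.subtype)) :
    z ∈ Submodule.span K {w | ∃ s ∈ S, ∃ q ∈ Q, w = s ⊗ₜ q} := by
  obtain ⟨Q', hQQ'⟩ := Q.exists_isCompl
  set p := Q.projection Q' hQQ'
  have hfix : lTensor M p z = z := by
    obtain ⟨y, rfl⟩ := hQ
    rw [← LinearMap.comp_apply, ← lTensor_comp]
    congr 2
    ext q
    exact Submodule.projection_apply_left hQQ' q
  rw [← hfix, ← Submodule.mem_comap]
  refine Submodule.span_le.mpr ?_ hz
  rintro _ ⟨s, hs, v, rfl⟩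
  exact Submodule.subset_span ⟨s, hs, p v, Submodule.projection_apply_mem hQQ' v, rfl⟩

section Galois

variable {k C D P : Type} [Field k] [AddCommGroup C] [Module k C] [AddCommGroup D]
  [Module k D] [Ring P] [Algebra k P]

structure IsEquivariantSplitting (ρ : P →ₗ[k] P ⊗[k] C) (σ : P →ₗ[k] P ⊗[k] P) : Prop where
  mul'_apply : ∀ p, mul' k P (σ p) = p
  mem_span : ∀ p, σ p ∈
    Submodule.span k {w : P ⊗[k] P | ∃ b ∈ coinv k C P ρ, ∃ q : P, w = b ⊗ₜ[k] q}
  map_coinv_mul : ∀ b ∈ coinv k C P ρ, ∀ p, σ (b * p) = rTensor P (mulLeft k b) (σ p)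
  colinear : ∀ p,
    rTensor C σ (ρ p) = (TensorProduct.assoc k P P C).symm (lTensor P ρ (σ p))

lemma canMap_eq_leftMulExtend (ρ : P →ₗ[k] P ⊗[k] C) : canMap k C P ρ = leftMulExtend ρ := rfl

lemma Asub_eq_ker_coinvMap (ρ : P →ₗ[k] P ⊗[k] C) (π : C →ₗ[k] D) (eb : D) :
    Asub k C D P ρ π eb = ker (coinvMap ρ π eb) := rfl

lemma Xsub_eq_ker_coinvMap [Coalgebra k C] (π : C →ₗ[k] D) (eb : D) :
    Xsub k C D π eb = ker (coinvMap (Coalgebra.comul (R := k) (A := C)) π eb) := rfl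

lemma galRelA_le_galRel (ρ : P →ₗ[k] P ⊗[k] C) (π : C →ₗ[k] D) (eb : D) :
    galRelA k C D P ρ π eb ≤ galRel k C P ρ :=
  Submodule.span_mono fun _ ⟨p, b, hb, a, _, hw⟩ => ⟨p, a, b, hb, hw⟩

lemma rTensor_mulLeft_sub_tmul_mul'_mem_galRelA (ρ : P →ₗ[k] P ⊗[k] C) (π : C →ₗ[k] D)
    (eb : D) (p : P) {z : P ⊗[k] P}
    (hz : z ∈ Submodule.span k
      {w | ∃ b ∈ coinv k C P ρ, ∃ a ∈ Asub k C D P ρ π eb, w = b ⊗ₜ[k] a}) :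
    rTensor P (mulLeft k p) z - p ⊗ₜ mul' k P z ∈ galRelA k C D P ρ π eb := by
  let L := rTensor P (mulLeft k p) - TensorProduct.mk k P P p ∘ₗ mul' k P
  change z ∈ (galRelA k C D P ρ π eb).comap L
  refine Submodule.span_le.mpr ?_ hz
  rintro _ ⟨b, hb, a, ha, rfl⟩
  exact Submodule.subset_span ⟨p, b, hb, a, ha, by simp [L]⟩

variable {ρ : P →ₗ[k] P ⊗[k] C} {σ : P →ₗ[k] P ⊗[k] P}

lemma IsEquivariantSplitting.galRel_le_ker (hσ : IsEquivariantSplitting ρ σ) :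
    galRel k C P ρ ≤ ker (leftMulExtend σ) := by
  refine Submodule.span_le.mpr ?_
  rintro _ ⟨p, q, b, hb, rfl⟩
  simp [hσ.map_coinv_mul b hb, mulLeft_mul, rTensor_comp]

lemma IsEquivariantSplitting.canMap_leftMulExtend (hσ : IsEquivariantSplitting ρ σ)
    (w : P ⊗[k] P) : canMap k C P ρ (leftMulExtend σ w) = canMap k C P ρ w := by
  rw [canMap_eq_leftMulExtend, leftMulExtend_leftMulExtend]
  congr 2
  exact LinearMap.ext (leftMulExtend_apply_of_section ρ σ hσ.mul'_apply hσ.colinear)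

lemma IsEquivariantSplitting.mem_range_lTensor_Asub (hσ : IsEquivariantSplitting ρ σ)
    (π : C →ₗ[k] D) (eb : D) {a : P} (ha : a ∈ Asub k C D P ρ π eb) :
    σ a ∈ range (lTensor P (Asub k C D P ρ π eb).subtype) := by
  rw [Asub_eq_ker_coinvMap] at ha ⊢
  rw [mem_range_lTensor_subtype_ker_iff]
  have h := assoc_symm_lTensor_coinvMap ρ ρ σ π eb hσ.colinear a
  rwa [mem_ker.mp ha, map_zero, LinearEquiv.map_eq_zero_iff] at h

lemma IsEquivariantSplitting.leftMulExtend_sub_self_mem_galRelA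
    (hσ : IsEquivariantSplitting ρ σ) (π : C →ₗ[k] D) (eb : D) {w : P ⊗[k] P}
    (hw : w ∈ range (lTensor P (Asub k C D P ρ π eb).subtype)) :
    leftMulExtend σ w - w ∈ galRelA k C D P ρ π eb := by
  obtain ⟨u, rfl⟩ := hw
  induction u using TensorProduct.induction_on with
  | zero => simp
  | tmul p a =>
    have hσa := mem_span_tmul_of_mem_range_lTensor_subtype _ _ (hσ.mem_span a)
      (hσ.mem_range_lTensor_Asub π eb a.2)
    simpa [hσ.mul'_apply] using rTensor_mulLeft_sub_tmul_mul'_mem_galRelA ρ π eb p hσa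
  | add x y hx hy => simpa only [map_add, add_sub_add_comm] using add_mem hx hy

lemma IsEquivariantSplitting.canMap_eq_zero_iff (hσ : IsEquivariantSplitting ρ σ)
    (hker : ker (canMap k C P ρ) = galRel k C P ρ) {π : C →ₗ[k] D} {eb : D} {w : P ⊗[k] P}
    (hw : w ∈ range (lTensor P (Asub k C D P ρ π eb).subtype)) :
    canMap k C P ρ w = 0 ↔ w ∈ galRelA k C D P ρ π eb := by
  rw [← mem_ker, hker]
  refine ⟨fun h => ?_, fun h => galRelA_le_galRel ρ π eb h⟩
  have := neg_mem (hσ.leftMulExtend_sub_self_mem_galRelA π eb hw)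
  rwa [mem_ker.mp (hσ.galRel_le_ker h), zero_sub, neg_neg] at this

section Coalgebra

variable [Coalgebra k C]

lemma assoc_symm_lTensor_coinvMap_canMap
    (hρ : ∀ p, TensorProduct.assoc k P C C (rTensor C ρ (ρ p)) =
      lTensor P (Coalgebra.comul (R := k) (A := C)) (ρ p))
    (π : C →ₗ[k] D) (eb : D) (w : P ⊗[k] P) :
    (TensorProduct.assoc k P C D).symm
        (lTensor P (coinvMap (Coalgebra.comul (R := k) (A := C)) π eb) (canMap k C P ρ w)) =
      rTensor D (canMap k C P ρ)
        ((TensorProduct.assoc k P P D).symm (lTensor P (coinvMap ρ π eb) w)) :=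
  assoc_symm_lTensor_leftMulExtend ρ _ _ (assoc_symm_lTensor_coinvMap ρ _ ρ π eb
    fun p => (LinearEquiv.eq_symm_apply _).mpr (hρ p)) w

lemma canMap_mem_range_lTensor_Xsub
    (hρ : ∀ p, TensorProduct.assoc k P C C (rTensor C ρ (ρ p)) =
      lTensor P (Coalgebra.comul (R := k) (A := C)) (ρ p))
    {π : C →ₗ[k] D} {eb : D} {w : P ⊗[k] P}
    (hw : w ∈ range (lTensor P (Asub k C D P ρ π eb).subtype)) :
    canMap k C P ρ w ∈ range (lTensor P (Xsub k C D π eb).subtype) := by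
  rw [Asub_eq_ker_coinvMap, mem_range_lTensor_subtype_ker_iff] at hw
  rw [Xsub_eq_ker_coinvMap, mem_range_lTensor_subtype_ker_iff,
    ← LinearEquiv.map_eq_zero_iff (TensorProduct.assoc k P C D).symm,
    assoc_symm_lTensor_coinvMap_canMap hρ, hw, map_zero, map_zero]

lemma IsEquivariantSplitting.mem_map_canMap (hσ : IsEquivariantSplitting ρ σ)
    (hρ : ∀ p, TensorProduct.assoc k P C C (rTensor C ρ (ρ p)) =
      lTensor P (Coalgebra.comul (R := k) (A := C)) (ρ p))
    (hsurj : Function.Surjective (canMap k C P ρ))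
    (hker : ker (canMap k C P ρ) = galRel k C P ρ) {π : C →ₗ[k] D} {eb : D} {v : P ⊗[k] C}
    (hv : v ∈ range (lTensor P (Xsub k C D π eb).subtype)) :
    v ∈ (range (lTensor P (Asub k C D P ρ π eb).subtype)).map (canMap k C P ρ) := by
  obtain ⟨w, rfl⟩ := hsurj v
  refine ⟨leftMulExtend σ w, ?_, hσ.canMap_leftMulExtend w⟩
  rw [Xsub_eq_ker_coinvMap, mem_range_lTensor_subtype_ker_iff] at hv
  have hw : (TensorProduct.assoc k P P D).symm (lTensor P (coinvMap ρ π eb) w) ∈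
      ker (rTensor D (canMap k C P ρ)) := by
    rw [mem_ker, ← assoc_symm_lTensor_coinvMap_canMap hρ, hv, map_zero]
  have hexact : Function.Exact (rTensor D (galRel k C P ρ).subtype) (rTensor D (canMap k C P ρ)) :=
    Module.Flat.rTensor_exact D (exact_iff.mpr (by rw [hker, Submodule.range_subtype]))
  obtain ⟨u, hu⟩ := (hexact _).mp hw
  have hkill : leftMulExtend σ ∘ₗ (galRel k C P ρ).subtype = 0 :=
    LinearMap.ext fun x => mem_ker.mp (hσ.galRel_le_ker x.2)
  rw [SetLike.mem_coe, Asub_eq_ker_coinvMap, mem_range_lTensor_subtype_ker_iff,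
    ← LinearEquiv.map_eq_zero_iff (TensorProduct.assoc k P P D).symm,
    assoc_symm_lTensor_leftMulExtend σ _ _ (assoc_symm_lTensor_coinvMap ρ ρ σ π eb
      hσ.colinear), ← hu, ← LinearMap.comp_apply, ← rTensor_comp, hkill, rTensor_zero,
    LinearMap.zero_apply]

end Coalgebra

end Galois

theorem stmt7
    (ρ : P →ₗ[k] P ⊗[k] C)
    (hρcoassoc : ∀ p : P,
      TensorProduct.assoc k P C C (LinearMap.rTensor C ρ (ρ p)) =
        LinearMap.lTensor P (Coalgebra.comul (R := k) (A := C)) (ρ p))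
    (e : C)
    -- the extension is Galois
    (hsurj : Function.Surjective (canMap k C P ρ))
    (hker : LinearMap.ker (canMap k C P ρ) = galRel k C P ρ)
    -- `P` is `C`-equivariantly projective as a left `B`-module
    (hproj : ∃ σ : P →ₗ[k] P ⊗[k] P,
      (∀ p : P, LinearMap.mul' k P (σ p) = p) ∧
      (∀ p : P, σ p ∈
        Submodule.span k {w : P ⊗[k] P | ∃ b ∈ coinv k C P ρ, ∃ q : P, w = b ⊗ₜ[k] q}) ∧
      (∀ b ∈ coinv k C P ρ, ∀ p : P,
        σ (b * p) = LinearMap.rTensor P (LinearMap.mulLeft k b) (σ p)) ∧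
      (∀ p : P,
        LinearMap.rTensor C σ (ρ p) =
          (TensorProduct.assoc k P P C).symm (LinearMap.lTensor P ρ (σ p))))
    (π : C →ₗ[k] D) :
    -- the Galois map is left `P`-linear
    (∀ (r : P) (w : P ⊗[k] P),
      canMap k C P ρ (LinearMap.rTensor P (LinearMap.mulLeft k r) w) =
        LinearMap.rTensor C (LinearMap.mulLeft k r) (canMap k C P ρ w)) ∧
    -- it maps `P ⊗ₖ A` onto `P ⊗ X` ...
    Submodule.map (canMap k C P ρ)
        (LinearMap.range (LinearMap.lTensor P (Asub k C D P ρ π (π e)).subtype)) =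
      LinearMap.range (LinearMap.lTensor P (Xsub k C D π (π e)).subtype) ∧
    -- ... with kernel exactly the kernel of `P ⊗ₖ A → P ⊗_B A`
    (∀ w ∈ LinearMap.range (LinearMap.lTensor P (Asub k C D P ρ π (π e)).subtype),
      (canMap k C P ρ w = 0 ↔ w ∈ galRelA k C D P ρ π (π e))) := by
  obtain ⟨σ, hσmul, hσspan, hσcoinv, hσcolin⟩ := hproj
  have hσ : IsEquivariantSplitting ρ σ := ⟨hσmul, hσspan, hσcoinv, hσcolin⟩
  refine ⟨leftMulExtend_rTensor_mulLeft ρ, le_antisymm ?_ ?_,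
    fun w hw => hσ.canMap_eq_zero_iff hker hw⟩
  · rintro _ ⟨w, hw, rfl⟩
    exact canMap_mem_range_lTensor_Xsub hρcoassoc hw
  · exact fun v hv => hσ.mem_map_canMap hρcoassoc hsurj hker hv
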